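/- Let Y_1,…,Y_n be i.i.d. non-negative random variables with order statistics Y_{1,n} ≤ … ≤ Y_{n,n}, with Y_{n−1,n} > 0 a.s. and the relevant expectations finite. Then E[Y_{n,n} ln Y_{n,n}] ≤ E[Y_{n,n}] ln(E[Y_{n,n}]) + E[(Y_{n,n} − Y_{n−1,n})² / Y_{n−1,n}]. -/

import Mathlib

/-!
View the sample as the coordinates of `(ℝⁿ, μ^⊗n)` and `F = Y_{n,n}` as a function there.
Entropy tensorizes: with `Uₖ = E[F | X₀, …, X_{k-1}]`, `Ent F = E[F log Uₙ] - E[F log U₀]`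
telescopes into `n` increments, and conditionally on the other coordinates the Gibbs
inequality bounds the `k`-th increment by the entropy of `F` in the `k`-th coordinate. That
entropy is at most `E[F log F - F log Gₖ - F + Gₖ]` for any `Gₖ > 0` not depending on the `k`-th
coordinate (this is `log (1 + u) ≤ u`). Take `Gₖ` the maximum of the other coordinates: it is
`F` unless `k` is the argmax, where it is `S = Y_{n-1,n}`, so the sum collapses to
`F log (F / S) - F + S ≤ (F - S)² / S`.
-/

open MeasureTheory ProbabilityTheory Real

/-- The Bregman divergence of `x ↦ x log x`; it equals `c * klFun (a / c)` for `a, c > 0`. -/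
noncomputable def mulLogBregman (a c : ℝ) : ℝ := a * log a - a * log c - a + c

lemma mulLogBregman_nonneg {a c : ℝ} (ha : 0 ≤ a) (hc : 0 < c) : 0 ≤ mulLogBregman a c := by
  rcases ha.eq_or_lt with rfl | ha
  · simpa [mulLogBregman] using hc.le
  · have h : log (c / a) ≤ c / a - 1 := log_le_sub_one_of_pos (by positivity)
    rw [log_div hc.ne' ha.ne'] at h
    have h' := mul_le_mul_of_nonneg_left h ha.le
    have e : a * (c / a - 1) = c - a := by field_simp
    unfold mulLogBregman
    linarith

lemma mulLogBregman_le_sq_div {a b : ℝ} (ha : 0 ≤ a) (hb : 0 < b) :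
    mulLogBregman a b ≤ (a - b) ^ 2 / b := by
  rcases ha.eq_or_lt with rfl | ha
  · simp [mulLogBregman, sq, hb.ne']
  · have h : log (a / b) ≤ a / b - 1 := log_le_sub_one_of_pos (by positivity)
    rw [log_div ha.ne' hb.ne'] at h
    have h' := mul_le_mul_of_nonneg_left h ha.le
    have e : (a - b) ^ 2 / b = a * (a / b - 1) - a + b := by field_simp; ring
    unfold mulLogBregman
    linarith

/-- Young's inequality for the convex conjugate pair `x log x - x` and `exp`. -/
lemma mul_log_le_mulLogBregman_add {z a u : ℝ} (hz : 0 ≤ z) (ha : 0 < a) (hu : 0 < u) :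
    z * log u ≤ mulLogBregman z a + a * (u - 1) := by
  have h := mulLogBregman_nonneg hz (mul_pos ha hu)
  rw [mulLogBregman, log_mul ha.ne' hu.ne'] at h
  unfold mulLogBregman
  linarith

lemma integral_pos_of_ae_pos {Ω : Type*} [MeasurableSpace Ω] {μ : Measure Ω} [NeZero μ]
    {f : Ω → ℝ} (hf : ∀ᵐ x ∂μ, 0 < f x) (hfi : Integrable f μ) : 0 < ∫ x, f x ∂μ := by
  rw [integral_pos_iff_support_of_nonneg_ae (hf.mono fun _ h => h.le) hfi, pos_iff_ne_zero]
  intro h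
  obtain ⟨x, hx, hx'⟩ := (hf.and (measure_eq_zero_iff_ae_notMem.mp h)).exists
  exact hx' hx.ne'

section Entropy

variable {Ω : Type*} [MeasurableSpace Ω]

noncomputable def entropy (μ : Measure Ω) (f : Ω → ℝ) : ℝ :=
  ∫ x, f x * log (f x) ∂μ - (∫ x, f x ∂μ) * log (∫ x, f x ∂μ)

variable {μ : Measure Ω} [IsProbabilityMeasure μ]

lemma integrable_mulLogBregman {f : Ω → ℝ} (hfi : Integrable f μ)
    (hflog : Integrable (fun x => f x * log (f x)) μ) (c : ℝ) :
    Integrable (fun x => mulLogBregman (f x) c) μ :=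
  ((hflog.sub (hfi.mul_const (log c))).sub hfi).add (integrable_const c)

lemma integral_mulLogBregman {f : Ω → ℝ} (hfi : Integrable f μ)
    (hflog : Integrable (fun x => f x * log (f x)) μ) (c : ℝ) :
    ∫ x, mulLogBregman (f x) c ∂μ
      = ∫ x, f x * log (f x) ∂μ - (∫ x, f x ∂μ) * log c - ∫ x, f x ∂μ + c := by
  have h₁ : Integrable (fun x => f x * log (f x) - f x * log c) μ := hflog.sub (hfi.mul_const _)
  have h₂ : Integrable (fun x => f x * log (f x) - f x * log c - f x) μ := h₁.sub hfi
  simp only [mulLogBregman]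
  rw [integral_add h₂ (integrable_const c), integral_sub h₁ hfi,
    integral_sub hflog (hfi.mul_const _), integral_mul_const, integral_const, probReal_univ,
    one_smul]

lemma entropy_le_integral_mulLogBregman {f : Ω → ℝ} (hf : ∀ᵐ x ∂μ, 0 ≤ f x)
    (hfi : Integrable f μ) (hflog : Integrable (fun x => f x * log (f x)) μ) {c : ℝ}
    (hc : 0 < c) : entropy μ f ≤ ∫ x, mulLogBregman (f x) c ∂μ := by
  have hmean := mulLogBregman_nonneg (integral_nonneg_of_ae hf) hc
  rw [integral_mulLogBregman hfi hflog, entropy]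
  unfold mulLogBregman at hmean
  linarith

/-- Gibbs' variational inequality. -/
lemma integral_mul_log_sub_log_integral_le_entropy {f g : Ω → ℝ} (hf : ∀ᵐ x ∂μ, 0 ≤ f x)
    (hg : ∀ᵐ x ∂μ, 0 < g x) (hfi : Integrable f μ)
    (hflog : Integrable (fun x => f x * log (f x)) μ) (hgi : Integrable g μ)
    (hfg : Integrable (fun x => f x * log (g x)) μ) :
    ∫ x, f x * (log (g x) - log (∫ y, g y ∂μ)) ∂μ ≤ entropy μ f := by
  set w := ∫ y, g y ∂μ with hw_def
  have hw : 0 < w := integral_pos_of_ae_pos hg hgi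
  rcases (integral_nonneg_of_ae hf).eq_or_lt with ha | ha
  · have hf0 : f =ᵐ[μ] 0 := (integral_eq_zero_iff_of_nonneg_ae hf hfi).mp ha.symm
    rw [integral_eq_zero_of_ae (hf0.mono fun x hx => by simp [hx]), entropy,
      integral_eq_zero_of_ae (hf0.mono fun x hx => by simp [hx]), ← ha]
    simp
  set a := ∫ x, f x ∂μ
  -- Young's inequality with `a = E[f]` and `u = g / E[g]`, integrated
  have hpoint : ∀ᵐ x ∂μ,
      f x * (log (g x) - log w) ≤ mulLogBregman (f x) a + a * (g x / w - 1) := by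
    filter_upwards [hf, hg] with x hfx hgx
    rw [← log_div hgx.ne' hw.ne']
    exact mul_log_le_mulLogBregman_add hfx ha (div_pos hgx hw)
  have hlhs : Integrable (fun x => f x * (log (g x) - log w)) μ := by
    have h : Integrable (fun x => f x * log (g x) - f x * log w) μ := hfg.sub (hfi.mul_const _)
    simpa only [mul_sub] using h
  have hbreg := integrable_mulLogBregman hfi hflog a
  have hg' : Integrable (fun x => a * (g x / w - 1)) μ :=
    ((hgi.div_const w).sub (integrable_const 1)).const_mul a
  have hrhs : ∫ x, mulLogBregman (f x) a + a * (g x / w - 1) ∂μ = entropy μ f := by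
    rw [integral_add hbreg hg', integral_mulLogBregman hfi hflog, integral_const_mul,
      integral_sub (hgi.div_const w) (integrable_const 1), integral_div, ← hw_def,
      div_self hw.ne', integral_const, probReal_univ, one_smul, entropy]
    ring
  exact hrhs ▸ integral_mono_ae hlhs (hbreg.add hg') hpoint

end Entropy

section PiMeasure

variable {ι α : Type*} [Fintype ι] [MeasurableSpace α] {μ : Measure α} [IsProbabilityMeasure μ]

lemma measurePreserving_update [DecidableEq ι] (i : ι) :
    MeasurePreserving (fun p : (ι → α) × α => Function.update p.1 i p.2)
      ((Measure.pi fun _ => μ).prod μ) (Measure.pi fun _ => μ) := by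
  have hmeas : Measurable fun p : (ι → α) × α => Function.update p.1 i p.2 :=
    measurable_update'
  refine ⟨hmeas, (Measure.pi_eq fun s hs => ?_).symm⟩
  have hpre : (fun p : (ι → α) × α => Function.update p.1 i p.2) ⁻¹' Set.univ.pi s
      = Set.univ.pi (Function.update s i Set.univ) ×ˢ s i := by
    ext ⟨x, t⟩
    simp only [Set.mem_preimage, Set.mem_pi, Set.mem_univ, true_implies, Set.mem_prod]
    constructor
    · intro h
      refine ⟨fun j => ?_, by simpa using h i⟩
      rcases eq_or_ne j i with rfl | hj
      · simp
      · simpa [hj] using h j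
    · rintro ⟨h, ht⟩ j
      rcases eq_or_ne j i with rfl | hj
      · simpa using ht
      · simpa [hj] using h j
  have hfactor (j : ι) :
      μ (Function.update s i Set.univ j) = Function.update (fun j => μ (s j)) i 1 j := by
    rcases eq_or_ne j i with rfl | hj <;> simp [*]
  rw [Measure.map_apply hmeas (.univ_pi hs), hpre, Measure.prod_prod, Measure.pi_pi,
    Fintype.prod_congr _ _ hfactor, Finset.prod_update_of_mem (Finset.mem_univ i), one_mul,
    ← Finset.mul_prod_erase _ _ (Finset.mem_univ i), mul_comm, Finset.sdiff_singleton_eq_erase]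

lemma measurePreserving_piecewise (s : Set ι) [DecidablePred (· ∈ s)] :
    MeasurePreserving (fun p : (ι → α) × (ι → α) => s.piecewise p.1 p.2)
      ((Measure.pi fun _ => μ).prod (Measure.pi fun _ => μ)) (Measure.pi fun _ => μ) := by
  have hmeas : Measurable fun p : (ι → α) × (ι → α) => s.piecewise p.1 p.2 :=
    measurable_pi_lambda _ fun j => by
      by_cases hj : j ∈ s
      · simpa [Set.piecewise, hj] using measurable_fst.eval
      · simpa [Set.piecewise, hj] using measurable_snd.eval
  refine ⟨hmeas, (Measure.pi_eq fun t ht => ?_).symm⟩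
  have hpre : (fun p : (ι → α) × (ι → α) => s.piecewise p.1 p.2) ⁻¹' Set.univ.pi t
      = Set.univ.pi (s.piecewise t fun _ => Set.univ)
          ×ˢ Set.univ.pi (s.piecewise (fun _ => Set.univ) t) := by
    ext ⟨x, y⟩
    simp only [Set.mem_preimage, Set.mem_pi, Set.mem_univ, true_implies, Set.mem_prod]
    constructor
    · intro h
      refine ⟨fun j => ?_, fun j => ?_⟩ <;> by_cases hj : j ∈ s <;> simp [hj] <;>
        simpa [hj] using h j
    · rintro ⟨hx, hy⟩ j
      by_cases hj : j ∈ s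
      · simpa [hj] using hx j
      · simpa [hj] using hy j
  rw [Measure.map_apply hmeas (.univ_pi ht), hpre, Measure.prod_prod, Measure.pi_pi, Measure.pi_pi,
    ← Finset.prod_mul_distrib]
  refine Finset.prod_congr rfl fun j _ => ?_
  by_cases hj : j ∈ s <;> simp [hj]

lemma ae_forall_apply_of_ae {p : α → Prop} (hp : ∀ᵐ t ∂μ, p t) :
    ∀ᵐ x ∂(Measure.pi fun _ : ι => μ), ∀ i, p (x i) :=
  ae_all_iff.mpr fun i => (measurePreserving_eval (fun _ => μ) i).quasiMeasurePreserving.ae hp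

variable [DecidableEq ι] {Φ : (ι → α) → ℝ}

lemma MeasureTheory.Integrable.comp_update (hΦ : Integrable Φ (Measure.pi fun _ => μ)) (i : ι) :
    Integrable (fun p : (ι → α) × α => Φ (Function.update p.1 i p.2))
      ((Measure.pi fun _ => μ).prod μ) :=
  (measurePreserving_update i).integrable_comp_of_integrable hΦ

lemma MeasureTheory.Integrable.ae_integrable_update (hΦ : Integrable Φ (Measure.pi fun _ => μ))
    (i : ι) : ∀ᵐ x ∂(Measure.pi fun _ => μ), Integrable (fun t => Φ (Function.update x i t)) μ :=
  (hΦ.comp_update i).prod_right_ae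

lemma MeasureTheory.Integrable.integrable_integral_update
    (hΦ : Integrable Φ (Measure.pi fun _ => μ)) (i : ι) :
    Integrable (fun x => ∫ t, Φ (Function.update x i t) ∂μ) (Measure.pi fun _ => μ) :=
  (hΦ.comp_update i).integral_prod_left

lemma integral_eq_integral_integral_update (hΦ : Integrable Φ (Measure.pi fun _ => μ)) (i : ι) :
    ∫ x, Φ x ∂(Measure.pi fun _ => μ)
      = ∫ x, ∫ t, Φ (Function.update x i t) ∂μ ∂(Measure.pi fun _ => μ) := by
  have hmp := measurePreserving_update (μ := μ) i
  have h := integral_map (f := Φ) hmp.aemeasurable (hmp.map_eq.symm ▸ hΦ.aestronglyMeasurable)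
  rw [hmp.map_eq] at h
  rw [h, integral_prod _ (hΦ.comp_update i)]

lemma ae_ae_update_of_ae {q : (ι → α) → Prop} (hq : ∀ᵐ x ∂(Measure.pi fun _ => μ), q x) (i : ι) :
    ∀ᵐ x ∂(Measure.pi fun _ => μ), ∀ᵐ t ∂μ, q (Function.update x i t) :=
  Measure.ae_ae_of_ae_prod ((measurePreserving_update i).quasiMeasurePreserving.ae hq)

end PiMeasure

section Splice

variable {α : Type*} {n : ℕ}

def splice (k : ℕ) (x y : Fin n → α) : Fin n → α := {j : Fin n | (j : ℕ) < k}.piecewise x y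

lemma splice_of_le {k : ℕ} (hk : n ≤ k) (x y : Fin n → α) : splice k x y = x := by
  funext j
  simp [splice, Set.piecewise, lt_of_lt_of_le j.isLt hk]

lemma splice_zero (x y : Fin n → α) : splice 0 x y = y := by
  funext j
  simp [splice, Set.piecewise]

lemma splice_update_right {k : ℕ} (hk : k < n) (x y : Fin n → α) (t : α) :
    splice k x (Function.update y ⟨k, hk⟩ t) = splice (k + 1) (Function.update x ⟨k, hk⟩ t) y := by
  funext j
  rcases lt_trichotomy (j : ℕ) k with h | h | h
  · have hj : j ≠ ⟨k, hk⟩ := fun he => by simp [he] at h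
    simp only [splice, Set.piecewise, Set.mem_ofPred_eq, if_pos h, if_pos (Nat.lt_succ_of_lt h),
      Function.update_of_ne hj]
  · obtain rfl : j = ⟨k, hk⟩ := Fin.ext h
    simp [splice, Set.piecewise]
  · have hj : j ≠ ⟨k, hk⟩ := fun he => by simp [he] at h
    have h' : ¬ (j : ℕ) < k + 1 := by omega
    simp only [splice, Set.piecewise, Set.mem_ofPred_eq, if_neg h.not_gt, if_neg h',
      Function.update_of_ne hj]

lemma splice_update_left_of_le {k : ℕ} {i : Fin n} (hi : k ≤ i) (x y : Fin n → α) (t : α) :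
    splice k (Function.update x i t) y = splice k x y := by
  funext j
  by_cases hj : (j : ℕ) < k
  · have : j ≠ i := fun he => by omega
    simp [splice, Set.piecewise, hj, this]
  · simp [splice, Set.piecewise, hj]

end Splice

section PrefixMean

variable {α : Type*} [MeasurableSpace α] {μ : Measure α} {n : ℕ} {F : (Fin n → α) → ℝ}

variable (μ) in
/-- `E[F | X₀, …, X_{k-1}]` at `x`, for independent coordinates `Xⱼ` with law `μ`. -/
noncomputable def prefixMean (F : (Fin n → α) → ℝ) (k : ℕ) (x : Fin n → α) : ℝ :=
  ∫ y, F (splice k x y) ∂(Measure.pi fun _ => μ)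

lemma prefixMean_of_le [IsProbabilityMeasure μ] (F : (Fin n → α) → ℝ) {k : ℕ} (hk : n ≤ k)
    (x : Fin n → α) : prefixMean μ F k x = F x := by
  simp [prefixMean, splice_of_le hk]

lemma prefixMean_zero (F : (Fin n → α) → ℝ) (x : Fin n → α) :
    prefixMean μ F 0 x = ∫ y, F y ∂(Measure.pi fun _ => μ) := by
  simp [prefixMean, splice_zero]

lemma prefixMean_update_of_le (F : (Fin n → α) → ℝ) {k : ℕ} {i : Fin n} (hi : k ≤ i)
    (x : Fin n → α) (t : α) : prefixMean μ F k (Function.update x i t) = prefixMean μ F k x := by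
  simp [prefixMean, splice_update_left_of_le hi]

variable [IsProbabilityMeasure μ]

lemma MeasureTheory.Integrable.comp_splice (hF : Integrable F (Measure.pi fun _ => μ)) (k : ℕ) :
    Integrable (fun p : (Fin n → α) × (Fin n → α) => F (splice k p.1 p.2))
      ((Measure.pi fun _ => μ).prod (Measure.pi fun _ => μ)) :=
  (measurePreserving_piecewise _).integrable_comp_of_integrable hF

lemma MeasureTheory.Integrable.prefixMean (hF : Integrable F (Measure.pi fun _ => μ)) (k : ℕ) :
    Integrable (prefixMean μ F k) (Measure.pi fun _ => μ) :=
  (hF.comp_splice k).integral_prod_left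

lemma ae_integral_prefixMean_succ_update (hF : Integrable F (Measure.pi fun _ => μ)) {k : ℕ}
    (hk : k < n) : ∀ᵐ x ∂(Measure.pi fun _ => μ),
      ∫ t, prefixMean μ F (k + 1) (Function.update x ⟨k, hk⟩ t) ∂μ = prefixMean μ F k x := by
  filter_upwards [(hF.comp_splice k).prod_right_ae] with x hx
  rw [prefixMean, integral_eq_integral_integral_update hx ⟨k, hk⟩,
    integral_integral_swap (hx.comp_update ⟨k, hk⟩)]
  simp only [prefixMean, splice_update_right hk]

end PrefixMean

section Tensorization

variable {α : Type*} [MeasurableSpace α] {μ : Measure α} [IsProbabilityMeasure μ] {n : ℕ}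
  {F : (Fin n → α) → ℝ}

/-- Neither `E[F | X₀, …, X_{k-1}]` nor `G` depends on the `k`-th coordinate, so conditionally on
the others this is Gibbs' inequality followed by `entropy_le_integral_mulLogBregman`. -/
lemma integral_mul_log_prefixMean_succ_sub_le {G : (Fin n → α) → ℝ} {k : ℕ} (hk : k < n)
    (hF : ∀ᵐ x ∂(Measure.pi fun _ => μ), 0 ≤ F x) (hFi : Integrable F (Measure.pi fun _ => μ))
    (hFlog : Integrable (fun x => F x * log (F x)) (Measure.pi fun _ => μ))
    (hU : ∀ᵐ x ∂(Measure.pi fun _ => μ), 0 < prefixMean μ F (k + 1) x)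
    (hFU : Integrable (fun x => F x * log (prefixMean μ F (k + 1) x)) (Measure.pi fun _ => μ))
    (hFU' : Integrable (fun x => F x * log (prefixMean μ F k x)) (Measure.pi fun _ => μ))
    (hG : ∀ᵐ x ∂(Measure.pi fun _ => μ), 0 < G x)
    (hG_update : ∀ x t, G (Function.update x ⟨k, hk⟩ t) = G x)
    (hD : Integrable (fun x => mulLogBregman (F x) (G x)) (Measure.pi fun _ => μ)) :
    ∫ x, F x * (log (prefixMean μ F (k + 1) x) - log (prefixMean μ F k x)) ∂(Measure.pi fun _ => μ)
      ≤ ∫ x, mulLogBregman (F x) (G x) ∂(Measure.pi fun _ => μ) := by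
  set κ : Fin n := ⟨k, hk⟩
  have hlhs : Integrable (fun x => F x * (log (prefixMean μ F (k + 1) x)
      - log (prefixMean μ F k x))) (Measure.pi fun _ => μ) := by
    have h : Integrable (fun x => F x * log (prefixMean μ F (k + 1) x)
        - F x * log (prefixMean μ F k x)) (Measure.pi fun _ => μ) := hFU.sub hFU'
    simpa only [mul_sub] using h
  rw [integral_eq_integral_integral_update hlhs κ, integral_eq_integral_integral_update hD κ]
  refine integral_mono_ae (hlhs.integrable_integral_update κ) (hD.integrable_integral_update κ) ?_
  filter_upwards [ae_ae_update_of_ae hF κ, ae_ae_update_of_ae hU κ, hFi.ae_integrable_update κ,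
    hFlog.ae_integrable_update κ, (hFi.prefixMean (k + 1)).ae_integrable_update κ,
    hFU.ae_integrable_update κ, ae_integral_prefixMean_succ_update hFi hk, hG]
    with x hFx hUx hFxi hFxlog hUxi hFUx hmean hGx
  have hUk (t : α) : prefixMean μ F k (Function.update x κ t) = prefixMean μ F k x :=
    prefixMean_update_of_le F (show k ≤ κ from le_rfl) x t
  simp only [hUk, hG_update]
  calc ∫ t, F (Function.update x κ t) * (log (prefixMean μ F (k + 1) (Function.update x κ t))
          - log (prefixMean μ F k x)) ∂μ
      ≤ entropy μ fun t => F (Function.update x κ t) := by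
        rw [← hmean]
        exact integral_mul_log_sub_log_integral_le_entropy hFx hUx hFxi hFxlog hUxi hFUx
    _ ≤ ∫ t, mulLogBregman (F (Function.update x κ t)) (G x) ∂μ :=
        entropy_le_integral_mulLogBregman hFx hFxi hFxlog hGx

/-- Tensorization (sub-additivity) of entropy. -/
theorem entropy_pi_le_sum_integral_mulLogBregman {G : Fin n → (Fin n → α) → ℝ}
    (hF : ∀ᵐ x ∂(Measure.pi fun _ => μ), 0 ≤ F x) (hFi : Integrable F (Measure.pi fun _ => μ))
    (hFlog : Integrable (fun x => F x * log (F x)) (Measure.pi fun _ => μ))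
    (hU : ∀ k < n, ∀ᵐ x ∂(Measure.pi fun _ => μ), 0 < prefixMean μ F (k + 1) x)
    (hFU : ∀ k ≤ n, Integrable (fun x => F x * log (prefixMean μ F k x)) (Measure.pi fun _ => μ))
    (hG : ∀ i, ∀ᵐ x ∂(Measure.pi fun _ => μ), 0 < G i x)
    (hG_update : ∀ i x t, G i (Function.update x i t) = G i x)
    (hD : ∀ i, Integrable (fun x => mulLogBregman (F x) (G i x)) (Measure.pi fun _ => μ)) :
    entropy (Measure.pi fun _ => μ) F
      ≤ ∑ i, ∫ x, mulLogBregman (F x) (G i x) ∂(Measure.pi fun _ => μ) := by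
  set I : ℕ → ℝ := fun k => ∫ x, F x * log (prefixMean μ F k x) ∂(Measure.pi fun _ => μ)
  have hent : entropy (Measure.pi fun _ => μ) F = I n - I 0 := by
    simp only [I, entropy, prefixMean_of_le F le_rfl, prefixMean_zero, integral_mul_const]
  have hstep : ∀ i : Fin n,
      I (i + 1) - I i ≤ ∫ x, mulLogBregman (F x) (G i x) ∂(Measure.pi fun _ => μ) := fun i => by
    simp only [I, ← integral_sub (hFU _ i.isLt) (hFU _ i.isLt.le), ← mul_sub]
    exact integral_mul_log_prefixMean_succ_sub_le i.isLt hF hFi hFlog (hU i i.isLt)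
      (hFU _ i.isLt) (hFU _ i.isLt.le) (hG i) (hG_update i) (hD i)
  rw [hent, ← Finset.sum_range_sub, ← Fin.sum_univ_eq_sum_range]
  exact Finset.sum_le_sum fun i _ => hstep i

end Tensorization

section OrderStatistics

variable {ι : Type*} [Fintype ι]

noncomputable def maxCoord (x : ι → ℝ) : ℝ := ⨆ i, x i

lemma le_maxCoord (x : ι → ℝ) (j : ι) : x j ≤ maxCoord x :=
  le_ciSup (Finite.bddAbove_range x) j

lemma measurable_maxCoord : Measurable (maxCoord : (ι → ℝ) → ℝ) :=
  Measurable.iSup fun i => measurable_pi_apply i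

variable [DecidableEq ι] [Nontrivial ι]

noncomputable def maxCoordExcept (i : ι) (x : ι → ℝ) : ℝ :=
  (Finset.univ.erase i).sup' Finset.univ_nontrivial.erase_nonempty x

noncomputable def secondMaxCoord (x : ι → ℝ) : ℝ :=
  Finset.univ.inf' Finset.univ_nonempty fun i => maxCoordExcept i x

lemma maxCoordExcept_le_maxCoord (i : ι) (x : ι → ℝ) : maxCoordExcept i x ≤ maxCoord x :=
  Finset.sup'_le _ _ fun j _ => le_maxCoord x j

lemma secondMaxCoord_le_maxCoordExcept (i : ι) (x : ι → ℝ) :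
    secondMaxCoord x ≤ maxCoordExcept i x :=
  Finset.inf'_le _ (Finset.mem_univ i)

lemma secondMaxCoord_le_maxCoord (x : ι → ℝ) : secondMaxCoord x ≤ maxCoord x :=
  (secondMaxCoord_le_maxCoordExcept (Classical.arbitrary ι) x).trans
    (maxCoordExcept_le_maxCoord _ x)

lemma maxCoordExcept_update (i : ι) (x : ι → ℝ) (t : ℝ) :
    maxCoordExcept i (Function.update x i t) = maxCoordExcept i x :=
  Finset.sup'_congr _ rfl fun _ hj => Function.update_of_ne (Finset.ne_of_mem_erase hj) _ _

lemma measurable_maxCoordExcept (i : ι) : Measurable (maxCoordExcept (ι := ι) i) := by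
  have h : maxCoordExcept (ι := ι) i
      = (Finset.univ.erase i).sup' Finset.univ_nontrivial.erase_nonempty fun j x => x j := by
    funext x
    rw [Finset.sup'_apply]
    rfl
  rw [h]
  exact Finset.measurable_sup' _ fun j _ => measurable_pi_apply j

lemma measurable_secondMaxCoord : Measurable (secondMaxCoord : (ι → ℝ) → ℝ) := by
  have h : (secondMaxCoord : (ι → ℝ) → ℝ)
      = Finset.univ.inf' Finset.univ_nonempty fun i x => maxCoordExcept i x := by
    funext x
    rw [Finset.inf'_apply]
    rfl
  rw [h]
  exact Finset.inf'_induction _ _ (fun _ hf _ hg => hf.inf hg)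
    fun i _ => measurable_maxCoordExcept i

/-- Leaving out any coordinate other than the largest one does not change the maximum, so only
the leave-out-the-argmax term survives, and it is the second largest coordinate. -/
lemma sum_mulLogBregman_maxCoordExcept (x : ι → ℝ) :
    ∑ i, mulLogBregman (maxCoord x) (maxCoordExcept i x)
      = mulLogBregman (maxCoord x) (secondMaxCoord x) := by
  obtain ⟨i₀, hi₀⟩ := exists_eq_ciSup_of_finite (f := x)
  have hother : ∀ i ≠ i₀, maxCoordExcept i x = maxCoord x := fun i hi =>
    (maxCoordExcept_le_maxCoord i x).antisymm
      (hi₀.symm.le.trans (Finset.le_sup' x (Finset.mem_erase.mpr ⟨hi.symm, Finset.mem_univ _⟩)))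
  have hsecond : secondMaxCoord x = maxCoordExcept i₀ x := by
    refine (secondMaxCoord_le_maxCoordExcept i₀ x).antisymm (Finset.le_inf' _ _ fun i _ => ?_)
    rcases eq_or_ne i i₀ with rfl | hi
    · exact le_rfl
    · exact hother i hi ▸ maxCoordExcept_le_maxCoord i₀ x
  rw [← Finset.add_sum_erase _ _ (Finset.mem_univ i₀), hsecond, add_eq_left]
  refine Finset.sum_eq_zero fun i hi => ?_
  rw [hother i (Finset.ne_of_mem_erase hi)]
  simp [mulLogBregman]

end OrderStatistics

section MaxOfIID

variable {μ : Measure ℝ} [IsProbabilityMeasure μ]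

lemma ae_pos_of_ae_secondMaxCoord_pos {ι : Type*} [Fintype ι] [DecidableEq ι] [Nontrivial ι]
    (hS : ∀ᵐ x ∂(Measure.pi fun _ : ι => μ), 0 < secondMaxCoord x) : ∀ᵐ t ∂μ, 0 < t := by
  have hbox : Set.univ.pi (fun _ : ι => Set.Iic (0 : ℝ)) ⊆ {x | ¬ 0 < secondMaxCoord x} :=
    fun x hx => not_lt.mpr ((secondMaxCoord_le_maxCoord x).trans
      (ciSup_le fun i => hx i (Set.mem_univ i)))
  have hnull : μ (Set.Iic 0) ^ Fintype.card ι = 0 := by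
    rw [← Finset.card_univ, ← Finset.prod_const, ← Measure.pi_pi]
    exact measure_mono_null hbox (ae_iff.mp hS)
  rw [ae_iff]
  simpa [Set.Iic] using (pow_eq_zero_iff Fintype.card_ne_zero).mp hnull

lemma integrable_id_of_integrable_maxCoord {ι : Type*} [Fintype ι] [Nonempty ι]
    (hnonneg : ∀ᵐ t ∂μ, 0 ≤ t) (hF : Integrable maxCoord (Measure.pi fun _ : ι => μ)) :
    Integrable id μ := by
  obtain ⟨i⟩ := ‹Nonempty ι›
  have hcoord : Integrable (fun x : ι → ℝ => x i) (Measure.pi fun _ => μ) := by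
    refine hF.mono' (measurable_pi_apply i).aestronglyMeasurable ?_
    filter_upwards [ae_forall_apply_of_ae hnonneg] with x hx
    rw [Real.norm_eq_abs, abs_of_nonneg (hx i)]
    exact le_maxCoord x i
  exact ((measurePreserving_eval (fun _ => μ) i).integrable_comp
    aestronglyMeasurable_id).mp hcoord

variable {n : ℕ}

/-- The `k`-th coordinate is not conditioned on, so it still has law `μ`, and the maximum
dominates it. -/
lemma integral_id_le_prefixMean_maxCoord (hF : Integrable maxCoord (Measure.pi fun _ : Fin n => μ))
    (hid : Integrable id μ) {k : ℕ} (hk : k < n) :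
    ∀ᵐ x ∂(Measure.pi fun _ : Fin n => μ), ∫ t, t ∂μ ≤ prefixMean μ maxCoord k x := by
  filter_upwards [(hF.comp_splice k).prod_right_ae] with x hx
  rw [← integral_eval (μ := fun _ : Fin n => μ) (i := ⟨k, hk⟩)]
  refine integral_mono (integrable_eval hid) hx fun y => ?_
  have hy : splice k x y ⟨k, hk⟩ = y ⟨k, hk⟩ := by simp [splice, Set.piecewise]
  exact hy ▸ le_maxCoord _ _

lemma integrable_maxCoord_mul_log_prefixMean (hpos : ∀ᵐ t ∂μ, 0 < t)
    (hF : Integrable maxCoord (Measure.pi fun _ : Fin n => μ))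
    (hFlog : Integrable (fun x => maxCoord x * log (maxCoord x)) (Measure.pi fun _ : Fin n => μ))
    {k : ℕ} (hk : k < n) :
    Integrable (fun x => maxCoord x * log (prefixMean μ maxCoord k x))
      (Measure.pi fun _ : Fin n => μ) := by
  have : Nonempty (Fin n) := ⟨⟨k, hk⟩⟩
  have hid := integrable_id_of_integrable_maxCoord (hpos.mono fun _ h => h.le) hF
  have hm : 0 < ∫ t, t ∂μ := integral_pos_of_ae_pos hpos hid
  have hU := hF.prefixMean (μ := μ) k
  refine integrable_of_le_of_le (g₁ := fun x => maxCoord x * log (∫ t, t ∂μ))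
    (g₂ := fun x => mulLogBregman (maxCoord x) 1 + (prefixMean μ maxCoord k x - 1))
    (hF.aestronglyMeasurable.mul
      (measurable_log.comp_aemeasurable hU.aemeasurable).aestronglyMeasurable) ?_ ?_
    (hF.mul_const _) ((integrable_mulLogBregman hF hFlog 1).add (hU.sub (integrable_const 1)))
  all_goals
    filter_upwards [integral_id_le_prefixMean_maxCoord hF hid hk,
      ae_forall_apply_of_ae hpos] with x hUx hx
    have hFx : 0 ≤ maxCoord x := (hx ⟨k, hk⟩).le.trans (le_maxCoord x _)
  · exact mul_le_mul_of_nonneg_left (log_le_log hm hUx) hFx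
  · simpa using mul_log_le_mulLogBregman_add hFx one_pos (hm.trans_le hUx)

lemma ae_prefixMean_maxCoord_succ_pos (hpos : ∀ᵐ t ∂μ, 0 < t)
    (hF : Integrable maxCoord (Measure.pi fun _ : Fin n => μ)) {k : ℕ} (hk : k < n) :
    ∀ᵐ x ∂(Measure.pi fun _ : Fin n => μ), 0 < prefixMean μ maxCoord (k + 1) x := by
  have : Nonempty (Fin n) := ⟨⟨k, hk⟩⟩
  rcases (Nat.succ_le_of_lt hk).lt_or_eq with hk' | hk'
  · have hid := integrable_id_of_integrable_maxCoord (hpos.mono fun _ h => h.le) hF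
    filter_upwards [integral_id_le_prefixMean_maxCoord hF hid hk'] with x hx
    exact (integral_pos_of_ae_pos hpos hid).trans_le hx
  · filter_upwards [ae_forall_apply_of_ae hpos] with x hx
    rw [prefixMean_of_le _ hk'.ge]
    exact (hx ⟨k, hk⟩).trans_le (le_maxCoord x _)

theorem entropy_maxCoord_le_integral_sq_div_secondMaxCoord [Nontrivial (Fin n)]
    (hS : ∀ᵐ x ∂(Measure.pi fun _ : Fin n => μ), 0 < secondMaxCoord x)
    (hF : Integrable maxCoord (Measure.pi fun _ : Fin n => μ))
    (hFlog : Integrable (fun x => maxCoord x * log (maxCoord x)) (Measure.pi fun _ : Fin n => μ))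
    (hR : Integrable (fun x => (maxCoord x - secondMaxCoord x) ^ 2 / secondMaxCoord x)
      (Measure.pi fun _ : Fin n => μ)) :
    entropy (Measure.pi fun _ : Fin n => μ) maxCoord
      ≤ ∫ x, (maxCoord x - secondMaxCoord x) ^ 2 / secondMaxCoord x
          ∂(Measure.pi fun _ : Fin n => μ) := by
  have hpos := ae_pos_of_ae_secondMaxCoord_pos hS
  have hFnonneg : ∀ᵐ x ∂(Measure.pi fun _ : Fin n => μ), 0 ≤ maxCoord x :=
    hS.mono fun x hx => hx.le.trans (secondMaxCoord_le_maxCoord x)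
  have hG (i : Fin n) : ∀ᵐ x ∂(Measure.pi fun _ : Fin n => μ), 0 < maxCoordExcept i x :=
    hS.mono fun x hx => hx.trans_le (secondMaxCoord_le_maxCoordExcept i x)
  have hsum : ∀ᵐ x ∂(Measure.pi fun _ : Fin n => μ),
      (∀ i, 0 ≤ mulLogBregman (maxCoord x) (maxCoordExcept i x)) ∧
      ∑ i, mulLogBregman (maxCoord x) (maxCoordExcept i x)
        ≤ (maxCoord x - secondMaxCoord x) ^ 2 / secondMaxCoord x := by
    filter_upwards [hS, hFnonneg] with x hSx hFx
    refine ⟨fun i => mulLogBregman_nonneg hFx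
      (hSx.trans_le (secondMaxCoord_le_maxCoordExcept i x)), ?_⟩
    rw [sum_mulLogBregman_maxCoordExcept]
    exact mulLogBregman_le_sq_div hFx hSx
  have hD (i : Fin n) : Integrable (fun x => mulLogBregman (maxCoord x) (maxCoordExcept i x))
      (Measure.pi fun _ : Fin n => μ) := by
    have hmeas := measurable_maxCoord (ι := Fin n)
    have hmeas' := measurable_maxCoordExcept (ι := Fin n) i
    refine hR.mono' (by unfold mulLogBregman; fun_prop) ?_
    filter_upwards [hsum] with x ⟨hnonneg, hle⟩
    rw [Real.norm_eq_abs, abs_of_nonneg (hnonneg i)]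
    exact (Finset.single_le_sum (fun j _ => hnonneg j) (Finset.mem_univ i)).trans hle
  calc entropy (Measure.pi fun _ : Fin n => μ) maxCoord
      ≤ ∑ i, ∫ x, mulLogBregman (maxCoord x) (maxCoordExcept i x) ∂(Measure.pi fun _ => μ) :=
        entropy_pi_le_sum_integral_mulLogBregman hFnonneg hF hFlog
          (fun k hk => ae_prefixMean_maxCoord_succ_pos hpos hF hk)
          (fun k hk => hk.lt_or_eq.elim (integrable_maxCoord_mul_log_prefixMean hpos hF hFlog)
            fun hk => by simpa only [prefixMean_of_le _ hk.ge] using hFlog)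
          hG maxCoordExcept_update hD
    _ = ∫ x, ∑ i, mulLogBregman (maxCoord x) (maxCoordExcept i x) ∂(Measure.pi fun _ => μ) :=
        (integral_finsetSum _ fun i _ => hD i).symm
    _ ≤ _ := integral_mono_ae (integrable_finsetSum _ fun i _ => hD i) hR (hsum.mono fun _ h => h.2)

end MaxOfIID

section Transfer

variable {Ω Ω' : Type*} [MeasurableSpace Ω] [MeasurableSpace Ω'] {μ : Measure Ω} {ν : Measure Ω'}
  {T : Ω → Ω'}

lemma MeasureTheory.MeasurePreserving.integral_comp_of_aestronglyMeasurable
    (hT : MeasurePreserving T μ ν) {g : Ω' → ℝ} (hg : AEStronglyMeasurable g ν) :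
    ∫ x, g (T x) ∂μ = ∫ y, g y ∂ν := by
  rw [← hT.map_eq] at hg ⊢
  exact (integral_map hT.aemeasurable hg).symm

lemma MeasureTheory.MeasurePreserving.entropy_comp (hT : MeasurePreserving T μ ν) {g : Ω' → ℝ}
    (hg : Measurable g) : entropy μ (fun x => g (T x)) = entropy ν g := by
  have hglog : Measurable fun y => g y * log (g y) := by fun_prop
  rw [entropy, entropy, hT.integral_comp_of_aestronglyMeasurable hg.aestronglyMeasurable,
    hT.integral_comp_of_aestronglyMeasurable (g := fun y => g y * log (g y))
      hglog.aestronglyMeasurable]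

lemma measurePreserving_pi_of_iIndepFun {ι β : Type*} [Fintype ι] [MeasurableSpace β]
    [IsProbabilityMeasure μ] {Y : ι → Ω → β} (hY : ∀ i, Measurable (Y i)) (hindep : iIndepFun Y μ)
    (hident : ∀ i j, μ.map (Y i) = μ.map (Y j)) (i₀ : ι) :
    MeasurePreserving (fun ω i => Y i ω) μ (Measure.pi fun _ => μ.map (Y i₀)) := by
  refine ⟨measurable_pi_lambda _ hY, ?_⟩
  rw [hindep.map_fun_eq_pi_map fun i => (hY i).aemeasurable]
  simp_rw [hident _ i₀]

end Transfer

/-- Let `Y_1, …, Y_n` (`n ≥ 2`) be i.i.d. non-negative random variables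
with top two order statistics `M = Y_{n,n}` and `M2 = Y_{n-1,n}`, with `M2 > 0` a.s. and
all relevant expectations finite. Then
`E[M ln M] ≤ E[M] ln (E[M]) + E[(M - M2)² / M2]`. -/
theorem stmt10 {Ω : Type*} [MeasureSpace Ω] [IsProbabilityMeasure (ℙ : Measure Ω)]
    (n : ℕ) (hn : 2 ≤ n) (Y : Fin n → Ω → ℝ)
    (hmeas : ∀ i, Measurable (Y i))
    (hindep : iIndepFun Y ℙ)
    (hident : ∀ i j, Measure.map (Y i) ℙ = Measure.map (Y j) ℙ)
    (M M2 : Ω → ℝ)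
    (hM : ∀ ω, M ω = ⨆ i, Y i ω)
    (hM2 : ∀ ω, M2 ω =
      Finset.univ.inf'
        (Finset.univ_nonempty_iff.mpr (Fin.pos_iff_nonempty.mp (by omega)))
        (fun i => (Finset.univ.erase i).sup'
          (Finset.card_pos.mp (by
            rw [Finset.card_erase_of_mem (Finset.mem_univ i), Finset.card_univ,
              Fintype.card_fin]
            omega))
          (fun j => Y j ω)))
    (hM2pos : ∀ᵐ ω ∂ℙ, 0 < M2 ω)
    (hMint : Integrable M ℙ)
    (hMlogint : Integrable (fun ω => M ω * Real.log (M ω)) ℙ)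
    (hratioint : Integrable (fun ω => (M ω - M2 ω) ^ 2 / M2 ω) ℙ) :
    ∫ ω, M ω * Real.log (M ω) ∂ℙ
      ≤ (∫ ω, M ω ∂ℙ) * Real.log (∫ ω, M ω ∂ℙ)
        + ∫ ω, (M ω - M2 ω) ^ 2 / M2 ω ∂ℙ := by
  have : Nontrivial (Fin n) := Fin.nontrivial_iff_two_le.mpr hn
  set μ := Measure.map (Y ⟨0, by omega⟩) ℙ
  have : IsProbabilityMeasure μ := Measure.isProbabilityMeasure_map (hmeas _).aemeasurable
  set T : Ω → Fin n → ℝ := fun ω i => Y i ω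
  have hT : MeasurePreserving T ℙ (Measure.pi fun _ => μ) :=
    measurePreserving_pi_of_iIndepFun hmeas hindep hident _
  obtain rfl : M = fun ω => maxCoord (T ω) := funext hM
  obtain rfl : M2 = fun ω => secondMaxCoord (T ω) := funext hM2
  have hF := measurable_maxCoord (ι := Fin n)
  have hS := measurable_secondMaxCoord (ι := Fin n)
  have hR : Measurable fun x : Fin n → ℝ =>
      (maxCoord x - secondMaxCoord x) ^ 2 / secondMaxCoord x := by
    fun_prop
  have hpullback {g : (Fin n → ℝ) → ℝ} (hg : Measurable g) (h : Integrable (g ∘ T) ℙ) :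
      Integrable g (Measure.pi fun _ => μ) :=
    (hT.integrable_comp hg.aestronglyMeasurable).mp h
  have hSpos : ∀ᵐ x : Fin n → ℝ ∂(Measure.pi fun _ => μ), 0 < secondMaxCoord x := by
    rw [← hT.map_eq]
    exact (ae_map_iff hT.aemeasurable (measurableSet_lt measurable_const hS)).mpr hM2pos
  have key := entropy_maxCoord_le_integral_sq_div_secondMaxCoord hSpos (hpullback hF hMint)
    (hpullback (by fun_prop) hMlogint) (hpullback hR hratioint)
  rw [← hT.entropy_comp hF, ← hT.integral_comp_of_aestronglyMeasurable hR.aestronglyMeasurable,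
    entropy] at key
  linarith
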